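/- arXiv:math/0403193 — 7 statements merged into one kernel-verified Lean document; each statement's English description precedes it below -/
import Mathlib

section
/- Let K be a nonempty compact Hausdorff connected F-space and let g : K → ℝ be continuous and nonconstant. Let t be the midpoint of the (nontrivial compact) interval g[K]. Then the closed sets cl(g⁻¹((-∞,t))) and cl(g⁻¹((t,∞))) are disjoint, their union is not all of K, and consequently the interior of g⁻¹({t}) is nonempty. -/
open Set Topology

noncomputable section

/-- A set is an `Fσ` set if it is a countable union of closed sets. -/
def IsFSigma {X : Type*} [TopologicalSpace X] (s : Set X) : Prop :=
  ∃ F : ℕ → Set X, (∀ n, IsClosed (F n)) ∧ s = ⋃ n, F n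

/-- A topological space is an `F`-space if any two disjoint open `Fσ` subsets
have disjoint closures. -/
def IsFSpace (X : Type*) [TopologicalSpace X] : Prop :=
  ∀ s t : Set X, IsOpen s → IsOpen t → IsFSigma s → IsFSigma t → Disjoint s t →
    Disjoint (closure s) (closure t)

/-!
The sets `{g < t}` and `{g > t}` are disjoint open `Fσ` sets, so in an `F`-space their closures
are disjoint. Since `t` lies strictly between `min g` and `max g`, both closures are nonempty, and
by connectedness two disjoint nonempty closed sets cannot cover `K`. The complement of their union
is a nonempty open set, and `g = t` on it.
-/

theorem IsFSigma.preimage {X Y : Type*} [TopologicalSpace X] [TopologicalSpace Y] {f : X → Y}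
    (hf : Continuous f) {s : Set Y} (hs : IsFSigma s) : IsFSigma (f ⁻¹' s) := by
  obtain ⟨F, hF, rfl⟩ := hs
  exact ⟨fun n => f ⁻¹' F n, fun n => (hF n).preimage hf, preimage_iUnion⟩

section OrderTopology

variable {α : Type*} [LinearOrder α] [TopologicalSpace α] [OrderTopology α] [DenselyOrdered α]
  [FirstCountableTopology α]

theorem isFSigma_Ioi [NoMaxOrder α] (a : α) : IsFSigma (Ioi a) := by
  obtain ⟨u, -, hau, hu⟩ := exists_seq_strictAnti_tendsto a
  refine ⟨fun n => Ici (u n), fun n => isClosed_Ici, ?_⟩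
  ext x
  simp only [mem_Ioi, mem_iUnion, mem_Ici]
  exact ⟨fun hx => (hu.eventually (gt_mem_nhds hx)).exists.imp fun _ => le_of_lt,
    fun ⟨n, hn⟩ => (hau n).trans_le hn⟩

theorem isFSigma_Iio [NoMinOrder α] (a : α) : IsFSigma (Iio a) :=
  isFSigma_Ioi (α := αᵒᵈ) (OrderDual.toDual a)

end OrderTopology

theorem IsFSpace.disjoint_closure_preimage_Iio_Ioi {X : Type*} [TopologicalSpace X]
    (hX : IsFSpace X) {g : X → ℝ} (hg : Continuous g) (t : ℝ) :
    Disjoint (closure (g ⁻¹' Iio t)) (closure (g ⁻¹' Ioi t)) :=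
  hX _ _ (isOpen_Iio.preimage hg) (isOpen_Ioi.preimage hg) ((isFSigma_Iio t).preimage hg)
    ((isFSigma_Ioi t).preimage hg) (Iio_disjoint_Ioi_same.preimage g)

theorem IsClosed.union_ne_univ_of_disjoint {X : Type*} [TopologicalSpace X] [PreconnectedSpace X]
    {s t : Set X} (hs : IsClosed s) (ht : IsClosed t) (hst : Disjoint s t) (hs' : s.Nonempty)
    (ht' : t.Nonempty) : s ∪ t ≠ univ := by
  intro hcover
  obtain ⟨x, -, hx⟩ := isPreconnected_closed_iff.mp isPreconnected_univ s t hs ht hcover.ge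
    (by rwa [univ_inter]) (by rwa [univ_inter])
  exact hst.ne_of_mem hx.1 hx.2 rfl

theorem interior_preimage_singleton {X α : Type*} [TopologicalSpace X] [LinearOrder α]
    (g : X → α) (t : α) :
    interior (g ⁻¹' {t}) = (closure (g ⁻¹' Iio t) ∪ closure (g ⁻¹' Ioi t))ᶜ := by
  rw [interior_eq_compl_closure_compl, ← preimage_compl, ← Iio_union_Ioi, preimage_union,
    closure_union]

theorem Set.Nontrivial.csInf_lt_csSup {α : Type*} [ConditionallyCompleteLinearOrder α]
    {s : Set α} (hs : s.Nontrivial) (hb : BddBelow s) (ha : BddAbove s) : sInf s < sSup s := by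
  obtain ⟨x, hx, y, hy, hxy⟩ := hs
  rcases hxy.lt_or_gt with h | h
  · exact (csInf_le hb hx).trans_lt (h.trans_le (le_csSup ha hy))
  · exact (csInf_le hb hy).trans_lt (h.trans_le (le_csSup ha hx))

theorem midpoint_fiber_has_interior_general {K : Type*} [TopologicalSpace K]
    [CompactSpace K] [ConnectedSpace K]
    (hK : IsFSpace K) (g : K → ℝ) (hg : Continuous g)
    (hnc : ¬ ∃ c : ℝ, ∀ x, g x = c)
    (t : ℝ) (ht : t = (sInf (Set.range g) + sSup (Set.range g)) / 2) :
    Disjoint (closure (g ⁻¹' Set.Iio t)) (closure (g ⁻¹' Set.Ioi t)) ∧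
    closure (g ⁻¹' Set.Iio t) ∪ closure (g ⁻¹' Set.Ioi t) ≠ Set.univ ∧
    (interior (g ⁻¹' {t})).Nonempty := by
  have hnt : (range g).Nontrivial := by
    simp only [not_exists, not_forall] at hnc
    obtain ⟨x, -⟩ := hnc 0
    obtain ⟨y, hy⟩ := hnc (g x)
    exact ⟨g y, mem_range_self y, g x, mem_range_self x, hy⟩
  have hcpt := isCompact_range hg
  have hlt := hnt.csInf_lt_csSup hcpt.bddBelow hcpt.bddAbove
  obtain ⟨a, ha⟩ := hcpt.sInf_mem hnt.nonempty
  obtain ⟨b, hb⟩ := hcpt.sSup_mem hnt.nonempty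
  have hdisj := hK.disjoint_closure_preimage_Iio_Ioi hg t
  have hcover := isClosed_closure.union_ne_univ_of_disjoint isClosed_closure hdisj
    ⟨a, subset_closure (show g a < t by rw [ha, ht]; linarith)⟩
    ⟨b, subset_closure (show t < g b by rw [hb, ht]; linarith)⟩
  refine ⟨hdisj, hcover, ?_⟩
  rwa [interior_preimage_singleton, nonempty_compl]

/-- On a nonempty compact Hausdorff connected `F`-space, a nonconstant continuous
real-valued function `g` has: the closures of the preimages of the two open half-lines
determined by the midpoint `t` of the image are disjoint, do not cover `K`, and
consequently `g⁻¹({t})` has nonempty interior. -/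
theorem midpoint_fiber_has_interior {K : Type*} [TopologicalSpace K] [Nonempty K]
    [CompactSpace K] [T2Space K] [ConnectedSpace K]
    (hK : IsFSpace K) (g : K → ℝ) (hg : Continuous g)
    (hnc : ¬ ∃ c : ℝ, ∀ x, g x = c)
    (t : ℝ) (ht : t = (sInf (Set.range g) + sSup (Set.range g)) / 2) :
    Disjoint (closure (g ⁻¹' Set.Iio t)) (closure (g ⁻¹' Set.Ioi t)) ∧
    closure (g ⁻¹' Set.Iio t) ∪ closure (g ⁻¹' Set.Ioi t) ≠ Set.univ ∧
    (interior (g ⁻¹' {t})).Nonempty :=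
  midpoint_fiber_has_interior_general hK g hg hnc t ht

end
end

section
/- Let X be a compact Hausdorff F-space and let F and G be F_σ subsets of X that are separated, i.e., cl(F) ∩ G = ∅ and F ∩ cl(G) = ∅. Then cl(F) ∩ cl(G) = ∅. -/
open Set Topology

noncomputable section

/-- In a compact Hausdorff `F`-space, two separated `Fσ` sets have disjoint closures. -/
theorem separated_FSigma_disjoint_closures {X : Type*} [TopologicalSpace X]
    [CompactSpace X] [T2Space X] (hX : IsFSpace X)
    (F G : Set X) (hF : IsFSigma F) (hG : IsFSigma G)
    (h1 : closure F ∩ G = ∅) (h2 : F ∩ closure G = ∅) :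
    closure F ∩ closure G = ∅ := by
  obtain ⟨f, hf, hFf⟩ := hF
  obtain ⟨g, hg, hGg⟩ := hG
  have h1' : Disjoint (closure F) G := disjoint_iff_inter_eq_empty.2 h1
  have h2' : Disjoint F (closure G) := disjoint_iff_inter_eq_empty.2 h2
  have sep : ∀ s t : Set X, IsClosed s → IsClosed t → Disjoint s t →
      ∃ U : Set X, IsOpen U ∧ s ⊆ U ∧ Disjoint (closure U) t := by
    intro s t hs ht hst
    obtain ⟨U, V, hU, hV, hsU, htV, hUV⟩ := NormalSpace.normal s t hs ht hst
    refine ⟨U, hU, hsU, ?_⟩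
    have hc : closure U ⊆ Vᶜ := closure_minimal hUV.subset_compl_right hV.isClosed_compl
    exact (disjoint_compl_left (a := V)).mono hc htV
  have key : ∀ (n : ℕ) (p : Set X × Set X),
      (IsOpen p.1 ∧ IsOpen p.2 ∧ Disjoint (closure p.1) (closure G) ∧
        Disjoint (closure p.2) (closure F) ∧ Disjoint (closure p.1) (closure p.2)) →
      ∃ q : Set X × Set X,
        (IsOpen q.1 ∧ IsOpen q.2 ∧ Disjoint (closure q.1) (closure G) ∧
          Disjoint (closure q.2) (closure F) ∧ Disjoint (closure q.1) (closure q.2)) ∧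
        closure p.1 ∪ f n ⊆ q.1 ∧ closure p.2 ∪ g n ⊆ q.2 := by
    rintro n ⟨W, V⟩ ⟨hWo, hVo, hWG, hVF, hWV⟩
    have hfF : f n ⊆ F := hFf ▸ subset_iUnion f n
    have hgG : g n ⊆ G := hGg ▸ subset_iUnion g n
    have hA : IsClosed (closure W ∪ f n) := isClosed_closure.union (hf n)
    have hAd : Disjoint (closure W ∪ f n) (closure G ∪ closure V) :=
      Disjoint.union_left (Disjoint.union_right hWG hWV)
        (Disjoint.union_right (h2'.mono_left hfF)
          (hVF.mono_right (hfF.trans subset_closure)).symm)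
    obtain ⟨U1, hU1o, hU1s, hU1d⟩ := sep _ _ hA
      (isClosed_closure.union isClosed_closure) hAd
    have hB : IsClosed (closure V ∪ g n) := isClosed_closure.union (hg n)
    have hBd : Disjoint (closure V ∪ g n) (closure F ∪ closure U1) :=
      Disjoint.union_left
        (Disjoint.union_right hVF (hU1d.mono_right subset_union_right).symm)
        (Disjoint.union_right (h1'.mono_right hgG).symm
          ((hU1d.mono_right subset_union_left).mono_right
            (hgG.trans subset_closure)).symm)
    obtain ⟨U2, hU2o, hU2s, hU2d⟩ := sep _ _ hB
      (isClosed_closure.union isClosed_closure) hBd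
    refine ⟨(U1, U2), ⟨hU1o, hU2o, hU1d.mono_right subset_union_left,
      hU2d.mono_right subset_union_left,
      (hU2d.mono_right subset_union_right).symm⟩, hU1s, hU2s⟩
  choose! stepf hstep hstep1 hstep2 using key
  set Inv : Set X × Set X → Prop := fun p =>
    IsOpen p.1 ∧ IsOpen p.2 ∧ Disjoint (closure p.1) (closure G) ∧
      Disjoint (closure p.2) (closure F) ∧ Disjoint (closure p.1) (closure p.2) with hInv
  set seq : ℕ → Set X × Set X :=
    fun n => Nat.rec ((∅ : Set X), (∅ : Set X)) (fun k ih => stepf k ih) n with hseq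
  have seq_succ : ∀ n, seq (n + 1) = stepf n (seq n) := fun n => rfl
  have hInv0 : Inv (seq 0) := by
    have h0 : seq 0 = ((∅ : Set X), (∅ : Set X)) := rfl
    rw [hInv, h0]
    refine ⟨isOpen_empty, isOpen_empty, ?_, ?_, ?_⟩ <;> simp
  have hInvn : ∀ n, Inv (seq n) := by
    intro n
    induction n with
    | zero => exact hInv0
    | succ k ih => rw [seq_succ]; exact hstep k (seq k) ih
  have hsub1 : ∀ n, closure (seq n).1 ∪ f n ⊆ (seq (n + 1)).1 := by
    intro n; rw [seq_succ]; exact hstep1 n (seq n) (hInvn n)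
  have hsub2 : ∀ n, closure (seq n).2 ∪ g n ⊆ (seq (n + 1)).2 := by
    intro n; rw [seq_succ]; exact hstep2 n (seq n) (hInvn n)
  have mono1 : ∀ m n, m ≤ n → (seq m).1 ⊆ (seq n).1 := by
    intro m n h
    induction h with
    | refl => exact subset_rfl
    | step h ih => exact ih.trans ((subset_closure.trans subset_union_left).trans (hsub1 _))
  have mono2 : ∀ m n, m ≤ n → (seq m).2 ⊆ (seq n).2 := by
    intro m n h
    induction h with
    | refl => exact subset_rfl
    | step h ih => exact ih.trans ((subset_closure.trans subset_union_left).trans (hsub2 _))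
  have hUF : (⋃ n, (seq n).1) = ⋃ n, closure (seq n).1 := by
    apply Subset.antisymm
    · exact iUnion_mono fun n => subset_closure
    · exact iUnion_subset fun n =>
        ((subset_union_left.trans (hsub1 n)).trans
          (subset_iUnion (fun k => (seq k).1) (n + 1)))
  have hVF' : (⋃ n, (seq n).2) = ⋃ n, closure (seq n).2 := by
    apply Subset.antisymm
    · exact iUnion_mono fun n => subset_closure
    · exact iUnion_subset fun n =>
        ((subset_union_left.trans (hsub2 n)).trans
          (subset_iUnion (fun k => (seq k).2) (n + 1)))
  have hFU : F ⊆ ⋃ n, (seq n).1 := by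
    rw [hFf]
    exact iUnion_subset fun n =>
      ((subset_union_right.trans (hsub1 n)).trans
        (subset_iUnion (fun k => (seq k).1) (n + 1)))
  have hGV : G ⊆ ⋃ n, (seq n).2 := by
    rw [hGg]
    exact iUnion_subset fun n =>
      ((subset_union_right.trans (hsub2 n)).trans
        (subset_iUnion (fun k => (seq k).2) (n + 1)))
  have hUV : Disjoint (⋃ n, (seq n).1) (⋃ n, (seq n).2) := by
    rw [disjoint_iUnion_left]
    intro n
    rw [disjoint_iUnion_right]
    intro m
    rcases le_total n m with h | h
    · exact ((hInvn m).2.2.2.2.mono subset_closure subset_closure).mono_left (mono1 n m h)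
    · exact (((hInvn n).2.2.2.2.mono subset_closure subset_closure).mono_right (mono2 m n h))
  have hdis := hX (⋃ n, (seq n).1) (⋃ n, (seq n).2)
    (isOpen_iUnion fun n => (hInvn n).1) (isOpen_iUnion fun n => (hInvn n).2.1)
    ⟨fun n => closure (seq n).1, fun n => isClosed_closure, hUF⟩
    ⟨fun n => closure (seq n).2, fun n => isClosed_closure, hVF'⟩ hUV
  exact disjoint_iff_inter_eq_empty.1
    ((hdis.mono (closure_mono hFU) (closure_mono hGV)))

end
end

section
/- For each t ∈ (0,1), the sets L_t and R_t are disjoint, both are nonempty, and their union is exactly the frontier Fr_{S_u}(f_u⁻¹(t)) of the fiber f_u⁻¹(t) in S_u. -/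
open Set Topology

noncomputable section

section Aux

lemma isFSigma_preimage_Iio {X : Type*} [TopologicalSpace X] {g : X → ℝ}
    (hg : Continuous g) (c : ℝ) : ∃ F : ℕ → Set X, (∀ n, IsClosed (F n)) ∧
      g ⁻¹' Set.Iio c = ⋃ n, F n := by
  refine ⟨fun n => g ⁻¹' Set.Iic (c - 1/(n+1)), fun n => isClosed_Iic.preimage hg, ?_⟩
  ext z
  simp only [mem_preimage, mem_Iio, mem_iUnion, mem_Iic]
  constructor
  · intro h
    obtain ⟨n, hn⟩ := exists_nat_one_div_lt (sub_pos.mpr h)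
    exact ⟨n, by linarith⟩
  · rintro ⟨n, hn⟩
    have h0 : (0:ℝ) < 1/((n:ℝ)+1) := by positivity
    linarith

lemma isFSigma_preimage_Ioi {X : Type*} [TopologicalSpace X] {g : X → ℝ}
    (hg : Continuous g) (c : ℝ) : ∃ F : ℕ → Set X, (∀ n, IsClosed (F n)) ∧
      g ⁻¹' Set.Ioi c = ⋃ n, F n := by
  refine ⟨fun n => g ⁻¹' Set.Ici (c + 1/(n+1)), fun n => isClosed_Ici.preimage hg, ?_⟩
  ext z
  simp only [mem_preimage, mem_Ioi, mem_iUnion, mem_Ici]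
  constructor
  · intro h
    obtain ⟨n, hn⟩ := exists_nat_one_div_lt (sub_pos.mpr h)
    exact ⟨n, by linarith⟩
  · rintro ⟨n, hn⟩
    have h0 : (0:ℝ) < 1/((n:ℝ)+1) := by positivity
    linarith

end Aux

end

noncomputable section

/-- `𝐒 = ℕ × [0,1]²` where `ℕ` is discrete and `[0,1]` is the unit interval. -/
abbrev bS : Type := ℕ × (unitInterval × unitInterval)

/-- `βπ : β𝐒 → βℕ`, the Stone–Čech extension of the projection `π(n,x,y) = n`. -/
def betaPi : StoneCech bS → StoneCech ℕ :=
  stoneCechExtend (continuous_stoneCechUnit.comp continuous_fst)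

/-- `βf : β𝐒 → [0,1]`, the Stone–Čech extension of `f(n,x,y) = x`. -/
def betaF : StoneCech bS → unitInterval :=
  stoneCechExtend (continuous_fst.comp continuous_snd)

/-- `S_u = βπ⁻¹(u)`, as a subset of `β𝐒` (carrying the subspace topology). -/
def Su (u : StoneCech ℕ) : Set (StoneCech bS) := betaPi ⁻¹' {u}

/-- `f_u : S_u → [0,1]`, the restriction of `βf` to `S_u`. -/
def fu (u : StoneCech ℕ) : (Su u) → unitInterval := fun z => betaF z.1

/-- `L_t = f_u⁻¹(t) ∩ cl_{S_u} f_u⁻¹([0,t))`. -/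
def Lset (u : StoneCech ℕ) (t : unitInterval) : Set (Su u) :=
  fu u ⁻¹' {t} ∩ closure (fu u ⁻¹' (Set.Ico 0 t))

/-- `R_t = f_u⁻¹(t) ∩ cl_{S_u} f_u⁻¹((t,1])`. -/
def Rset (u : StoneCech ℕ) (t : unitInterval) : Set (Su u) :=
  fu u ⁻¹' {t} ∩ closure (fu u ⁻¹' (Set.Ioc t 1))

/-- The rectangle `P_{s,r} = S_u ∩ cl_{β𝐒}(ℕ × [s,r] × I)`, viewed as a subset of `S_u`. -/
def Pset (u : StoneCech ℕ) (s r : unitInterval) : Set (Su u) :=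
  Subtype.val ⁻¹' closure (stoneCechUnit '' {p : bS | p.2.1 ∈ Set.Icc s r})

/-- `L_{s,t} = cl_{S_u}(⋃_{s<r<t} P_{s,r})`. -/
def Lst (u : StoneCech ℕ) (s t : unitInterval) : Set (Su u) :=
  closure (⋃ r ∈ Set.Ioo s t, Pset u s r)

/-- The interior of `B` in the subspace `A`, viewed as a subset of the ambient space. -/
def relInt {Y : Type*} [TopologicalSpace Y] (A B : Set Y) : Set Y :=
  Subtype.val '' interior ((Subtype.val : A → Y) ⁻¹' B)

/-- The transfinite sequence `X_α ⊆ S_u`: `X_0 = S_u`,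
`X_{α+1} = X_α \ ⋃_{t} Int_{X_α}(X_α ∩ f_u⁻¹(t))`, and `X_λ = ⋂_{β<λ} X_β` at limits. -/
def Xseq (u : StoneCech ℕ) : Ordinal → Set (Su u) := fun α =>
  Ordinal.limitRecOn α Set.univ
    (fun _ Xa => Xa \ ⋃ t : unitInterval, relInt Xa (Xa ∩ fu u ⁻¹' {t}))
    (fun o _ ih => ⋂ (β : {β : Ordinal // β < o}), ih β.1 β.2)

/-- The bottom line `B_u = S_u ∩ cl_{β𝐒}(ℕ × I × {0})`, viewed as a subset of `S_u`. -/
def Bu (u : StoneCech ℕ) : Set (Su u) :=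
  Subtype.val ⁻¹' closure (stoneCechUnit '' {p : bS | p.2.2 = 0})

/-- The top line `T_u = S_u ∩ cl_{β𝐒}(ℕ × I × {1})`, viewed as a subset of `S_u`. -/
def Tu (u : StoneCech ℕ) : Set (Su u) :=
  Subtype.val ⁻¹' closure (stoneCechUnit '' {p : bS | p.2.2 = 1})

/-- `βf` is continuous. -/
lemma continuous_betaF : Continuous betaF :=
  continuous_stoneCechExtend _

/-- `βπ` is continuous. -/
lemma continuous_betaPi : Continuous betaPi :=
  continuous_stoneCechExtend _

/-- `f_u` is continuous. -/
lemma continuous_fu (u : StoneCech ℕ) : Continuous (fu u) :=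
  continuous_betaF.comp continuous_subtype_val

/-- `f_u` is surjective: every value `x ∈ [0,1]` is attained. -/
lemma exists_fu_eq (u : StoneCech ℕ) (x : unitInterval) : ∃ z : Su u, fu u z = x := by
  set g : ℕ → StoneCech bS := fun n => stoneCechUnit (n, (x, 0)) with hg_def
  have hg : Continuous g := continuous_of_discreteTopology
  set G : StoneCech ℕ → StoneCech bS := stoneCechExtend hg with hG_def
  have hGu : G ∘ stoneCechUnit = g := stoneCechExtend_extends hg
  have h1 : betaPi ∘ G = id := by
    apply denseRange_stoneCechUnit.equalizer
      (continuous_betaPi.comp (continuous_stoneCechExtend hg)) continuous_id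
    funext n
    show betaPi (G (stoneCechUnit n)) = stoneCechUnit n
    rw [show G (stoneCechUnit n) = stoneCechUnit ((n, (x, 0)) : bS) from congrFun hGu n]
    exact congrFun (stoneCechExtend_extends (continuous_stoneCechUnit.comp continuous_fst))
      ((n, (x, 0)) : bS)
  have h2 : betaF ∘ G = fun _ => x := by
    apply denseRange_stoneCechUnit.equalizer
      (continuous_betaF.comp (continuous_stoneCechExtend hg)) continuous_const
    funext n
    show betaF (G (stoneCechUnit n)) = x
    rw [show G (stoneCechUnit n) = stoneCechUnit ((n, (x, 0)) : bS) from congrFun hGu n]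
    exact congrFun (stoneCechExtend_extends (continuous_fst.comp continuous_snd))
      ((n, (x, 0)) : bS)
  have hmem : G u ∈ Su u := by
    have := congrFun h1 u
    simpa [Su] using this
  exact ⟨⟨G u, hmem⟩, congrFun h2 u⟩

/-- For `t ∈ (0,1)`, `L_t` and `R_t` are disjoint, both nonempty, and their union
is the frontier of the fiber `f_u⁻¹(t)` in `S_u`. -/
theorem Lset_Rset_partition_frontier (u : StoneCech ℕ)
    (hu : ∀ n : ℕ, u ≠ stoneCechUnit n)
    (hne : (Su u).Nonempty) (hcomp : IsCompact (Su u)) (hconn : IsConnected (Su u))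
    (hFsp : IsFSpace (Su u))
    (t : unitInterval) (ht : t ∈ Set.Ioo (0 : unitInterval) 1) :
    Disjoint (Lset u t) (Rset u t) ∧ (Lset u t).Nonempty ∧ (Rset u t).Nonempty ∧
    Lset u t ∪ Rset u t = frontier (fu u ⁻¹' {t}) := by
  have hf := continuous_fu u
  set A : Set (Su u) := fu u ⁻¹' (Set.Ico 0 t) with hA_def
  set B : Set (Su u) := fu u ⁻¹' (Set.Ioc t 1) with hB_def
  have hg : Continuous (fun z : Su u => ((fu u z : ℝ))) := continuous_subtype_val.comp hf
  -- basic set identities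
  have hA_eq : A = (fun z : Su u => ((fu u z : ℝ))) ⁻¹' Set.Iio (t : ℝ) := by
    ext z
    simp only [hA_def, mem_preimage, Set.mem_Ico, Set.mem_Iio]
    exact ⟨fun h => Subtype.coe_lt_coe.mpr h.2,
      fun h => ⟨unitInterval.nonneg', Subtype.coe_lt_coe.mp h⟩⟩
  have hB_eq : B = (fun z : Su u => ((fu u z : ℝ))) ⁻¹' Set.Ioi (t : ℝ) := by
    ext z
    simp only [hB_def, mem_preimage, Set.mem_Ioc, Set.mem_Ioi]
    exact ⟨fun h => Subtype.coe_lt_coe.mpr h.1,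
      fun h => ⟨Subtype.coe_lt_coe.mp h, unitInterval.le_one'⟩⟩
  have hA_open : IsOpen A := hA_eq ▸ (isOpen_Iio.preimage hg)
  have hB_open : IsOpen B := hB_eq ▸ (isOpen_Ioi.preimage hg)
  have hA_fs : IsFSigma A := hA_eq ▸ isFSigma_preimage_Iio hg (t : ℝ)
  have hB_fs : IsFSigma B := hB_eq ▸ isFSigma_preimage_Ioi hg (t : ℝ)
  have hAB : Disjoint A B := by
    rw [Set.disjoint_left]
    intro z hzA hzB
    exact absurd (hzA.2.trans hzB.1) (lt_irrefl _)
  have hclAB : Disjoint (closure A) (closure B) :=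
    hFsp A B hA_open hB_open hA_fs hB_fs hAB
  -- connectedness infrastructure
  have : ConnectedSpace (Su u) := Subtype.connectedSpace hconn
  -- nonemptiness of Lset
  have hLne : (Lset u t).Nonempty := by
    by_contra h
    rw [Set.not_nonempty_iff_eq_empty] at h
    set C : Set (Su u) := fu u ⁻¹' (Set.Icc t 1) with hC_def
    have hC_closed : IsClosed C := (isClosed_Icc).preimage hf
    have hsub : closure A ⊆ fu u ⁻¹' (Set.Icc 0 t) :=
      closure_minimal (fun z hz => ⟨hz.1, hz.2.le⟩) ((isClosed_Icc).preimage hf)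
    have hdisj : closure A ∩ C = ∅ := by
      ext z
      simp only [mem_inter_iff, mem_empty_iff_false, iff_false]
      rintro ⟨hz1, hz2⟩
      have h1 : fu u z ≤ t := (hsub hz1).2
      have h2 : t ≤ fu u z := hz2.1
      have heq : fu u z = t := le_antisymm h1 h2
      have : z ∈ Lset u t := ⟨heq, hz1⟩
      rw [h] at this
      exact this
    have hcover : closure A ∪ C = Set.univ := by
      ext z
      simp only [mem_union, mem_univ, iff_true]
      rcases le_or_gt t (fu u z) with h' | h'
      · exact Or.inr ⟨h', unitInterval.le_one'⟩
      · exact Or.inl (subset_closure ⟨unitInterval.nonneg', h'⟩)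
    have hclopen : IsClopen (closure A) := by
      constructor
      · exact isClosed_closure
      · have : closure A = Cᶜ := by
          ext z
          simp only [Set.mem_compl_iff]
          constructor
          · intro hz hzC
            simpa [hdisj] using Set.mem_inter hz hzC
          · intro hz
            exact (Set.eq_univ_iff_forall.mp hcover z).resolve_right hz
        rw [this]
        exact hC_closed.isOpen_compl
    rcases isClopen_iff.mp hclopen with h0 | h1
    · obtain ⟨z0, hz0⟩ := exists_fu_eq u 0
      have : z0 ∈ closure A := subset_closure (by
        rw [hA_def, mem_preimage, hz0]
        exact ⟨le_refl _, ht.1⟩)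
      rw [h0] at this
      exact this
    · obtain ⟨z1, hz1⟩ := exists_fu_eq u t
      have hz1C : z1 ∈ C := by
        rw [hC_def, mem_preimage, hz1]
        exact ⟨le_refl _, unitInterval.le_one'⟩
      have : z1 ∈ closure A ∩ C := ⟨h1 ▸ mem_univ z1, hz1C⟩
      rw [hdisj] at this
      exact this
  -- nonemptiness of Rset
  have hRne : (Rset u t).Nonempty := by
    by_contra h
    rw [Set.not_nonempty_iff_eq_empty] at h
    set C : Set (Su u) := fu u ⁻¹' (Set.Icc 0 t) with hC_def
    have hC_closed : IsClosed C := (isClosed_Icc).preimage hf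
    have hsub : closure B ⊆ fu u ⁻¹' (Set.Icc t 1) :=
      closure_minimal (fun z hz => ⟨hz.1.le, hz.2⟩) ((isClosed_Icc).preimage hf)
    have hdisj : closure B ∩ C = ∅ := by
      ext z
      simp only [mem_inter_iff, mem_empty_iff_false, iff_false]
      rintro ⟨hz1, hz2⟩
      have h1 : t ≤ fu u z := (hsub hz1).1
      have h2 : fu u z ≤ t := hz2.2
      have heq : fu u z = t := le_antisymm h2 h1
      have : z ∈ Rset u t := ⟨heq, hz1⟩
      rw [h] at this
      exact this
    have hcover : closure B ∪ C = Set.univ := by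
      ext z
      simp only [mem_union, mem_univ, iff_true]
      rcases le_or_gt (fu u z) t with h' | h'
      · exact Or.inr ⟨unitInterval.nonneg', h'⟩
      · exact Or.inl (subset_closure ⟨h', unitInterval.le_one'⟩)
    have hclopen : IsClopen (closure B) := by
      constructor
      · exact isClosed_closure
      · have : closure B = Cᶜ := by
          ext z
          simp only [Set.mem_compl_iff]
          constructor
          · intro hz hzC
            simpa [hdisj] using Set.mem_inter hz hzC
          · intro hz
            exact (Set.eq_univ_iff_forall.mp hcover z).resolve_right hz
        rw [this]
        exact hC_closed.isOpen_compl
    rcases isClopen_iff.mp hclopen with h0 | h1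
    · obtain ⟨z0, hz0⟩ := exists_fu_eq u 1
      have : z0 ∈ closure B := subset_closure (by
        rw [hB_def, mem_preimage, hz0]
        exact ⟨ht.2, le_refl _⟩)
      rw [h0] at this
      exact this
    · obtain ⟨z1, hz1⟩ := exists_fu_eq u t
      have hz1C : z1 ∈ C := by
        rw [hC_def, mem_preimage, hz1]
        exact ⟨unitInterval.nonneg', le_refl _⟩
      have : z1 ∈ closure B ∩ C := ⟨h1 ▸ mem_univ z1, hz1C⟩
      rw [hdisj] at this
      exact this
  refine ⟨?_, hLne, hRne, ?_⟩
  · exact Disjoint.mono (Set.inter_subset_right) (Set.inter_subset_right) hclAB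
  · -- union = frontier
    have hF_closed : IsClosed (fu u ⁻¹' {t}) := (isClosed_singleton).preimage hf
    have hcompl : (fu u ⁻¹' {t})ᶜ = A ∪ B := by
      ext z
      simp only [mem_compl_iff, mem_preimage, mem_singleton_iff, mem_union, hA_def, hB_def,
        Set.mem_Ico, Set.mem_Ioc]
      constructor
      · intro hz
        rcases lt_or_gt_of_ne hz with h' | h'
        · exact Or.inl ⟨unitInterval.nonneg', h'⟩
        · exact Or.inr ⟨h', unitInterval.le_one'⟩
      · rintro (⟨_, h'⟩ | ⟨h', _⟩)
        · exact h'.ne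
        · exact h'.ne'
    rw [frontier_eq_closure_inter_closure, hF_closed.closure_eq, hcompl, closure_union]
    rw [Lset, Rset, ← hA_def, ← hB_def, ← Set.inter_union_distrib_left]

end
end

section
/- For all s, r with 0 ≤ s < r ≤ 1, the 'rectangle' P_{s,r} := S_u ∩ cl_{β𝐒}(ℕ × [s,r] × I) is a connected subset of S_u, where ℕ × [s,r] × I denotes the image in β𝐒, under the canonical map 𝐒 → β𝐒, of the set of points (n,x,y) ∈ 𝐒 with x ∈ [s,r]. -/
open Set Topology

noncomputable section

/-!
The clamp `(n, x, y) ↦ (n, min (max x s) r, y)` is a retraction of `𝐒` onto `ℕ × [s,r] × I` that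
commutes with `π`. Its Stone–Čech extension is therefore a retraction of `β𝐒` onto
`cl_{β𝐒}(ℕ × [s,r] × I)` that maps `S_u` into itself, so `P_{s,r}` is the continuous image of the
connected space `S_u`.
-/

namespace StoneCech

variable {X Y : Type*} [TopologicalSpace X] [TopologicalSpace Y]

def map {f : X → Y} (hf : Continuous f) : StoneCech X → StoneCech Y :=
  stoneCechExtend (continuous_stoneCechUnit.comp hf)

theorem continuous_map {f : X → Y} (hf : Continuous f) : Continuous (map hf) :=
  continuous_stoneCechExtend _

@[simp]
theorem map_stoneCechUnit {f : X → Y} (hf : Continuous f) (x : X) :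
    map hf (stoneCechUnit x) = stoneCechUnit (f x) :=
  stoneCechExtend_stoneCechUnit _ x

theorem map_comp_map_of_comp_eq {f : X → Y} {g : X → X} (hf : Continuous f) (hg : Continuous g)
    (hfg : f ∘ g = f) : map hf ∘ map hg = map hf :=
  stoneCech_hom_ext ((continuous_map hf).comp (continuous_map hg)) (continuous_map hf) <| by
    funext x
    simp only [Function.comp_apply, map_stoneCechUnit]
    exact congrArg stoneCechUnit (congrFun hfg x)

section Retraction

variable {A : Set X} {g : X → X} (hg : Continuous g)

theorem map_mem_closure_image (hgA : ∀ x, g x ∈ A) (z : StoneCech X) :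
    map hg z ∈ closure (stoneCechUnit '' A) := by
  have hz : z ∈ closure (range stoneCechUnit) := by
    rw [denseRange_stoneCechUnit.closure_range]; trivial
  refine closure_mono ?_ (image_closure_subset_closure_image (continuous_map hg) ⟨z, hz, rfl⟩)
  rintro _ ⟨_, ⟨x, rfl⟩, rfl⟩
  exact ⟨g x, hgA x, (map_stoneCechUnit hg x).symm⟩

theorem eqOn_map_closure_image (hgid : ∀ x ∈ A, g x = x) :
    EqOn (map hg) id (closure (stoneCechUnit '' A)) := by
  refine EqOn.closure ?_ (continuous_map hg) continuous_id
  rintro _ ⟨x, hx, rfl⟩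
  rw [map_stoneCechUnit, hgid x hx, id]

theorem image_map_of_retraction (hgA : ∀ x, g x ∈ A) (hgid : ∀ x ∈ A, g x = x)
    {F : Set (StoneCech X)} (hF : MapsTo (map hg) F F) :
    map hg '' F = F ∩ closure (stoneCechUnit '' A) := by
  refine Subset.antisymm ?_ fun z ⟨hzF, hzA⟩ => ⟨z, hzF, eqOn_map_closure_image hg hgid hzA⟩
  rintro _ ⟨z, hz, rfl⟩
  exact ⟨hF hz, map_mem_closure_image hg hgA z⟩

end Retraction

end StoneCech

open StoneCech

theorem betaPi_eq_map : betaPi = map (continuous_fst : Continuous (Prod.fst : bS → ℕ)) := rfl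

def clampFst {s r : unitInterval} (hsr : s ≤ r) (p : bS) : bS :=
  (p.1, (projIcc s r hsr p.2.1, p.2.2))

theorem continuous_clampFst {s r : unitInterval} (hsr : s ≤ r) : Continuous (clampFst hsr) := by
  have := continuous_projIcc (a := s) (b := r) (h := hsr)
  unfold clampFst
  fun_prop

theorem clampFst_mem {s r : unitInterval} (hsr : s ≤ r) (p : bS) :
    (clampFst hsr p).2.1 ∈ Icc s r :=
  (projIcc s r hsr p.2.1).2

theorem clampFst_of_mem {s r : unitInterval} (hsr : s ≤ r) {p : bS} (hp : p.2.1 ∈ Icc s r) :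
    clampFst hsr p = p := by
  simp [clampFst, projIcc_of_mem hsr hp]

theorem mapsTo_map_clampFst_Su {s r : unitInterval} (hsr : s ≤ r) (u : StoneCech ℕ) :
    MapsTo (map (continuous_clampFst hsr)) (Su u) (Su u) := fun z (hz : betaPi z = u) => by
  change betaPi _ = u
  rw [← hz, betaPi_eq_map, ← Function.comp_apply (f := map _),
    map_comp_map_of_comp_eq _ _ rfl]

theorem Pset_isConnected_general (u : StoneCech ℕ)
    (hconn : IsConnected (Su u)) :
    ∀ s r : unitInterval, s < r → IsConnected (Pset u s r) := by
  intro s r hsr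
  have hretract := image_map_of_retraction (continuous_clampFst hsr.le)
    (A := {p : bS | p.2.1 ∈ Icc s r}) (clampFst_mem hsr.le) (fun _ => clampFst_of_mem hsr.le)
    (mapsTo_map_clampFst_Su hsr.le u)
  have himage : IsConnected (Subtype.val '' Pset u s r) := by
    rw [Pset, Subtype.image_preimage_coe, ← hretract]
    exact hconn.image _ (continuous_map _).continuousOn
  exact ⟨himage.nonempty.of_image, IsInducing.subtypeVal.isPreconnected_image.mp himage.2⟩

/-- For `s < r`, the rectangle `P_{s,r} = S_u ∩ cl_{β𝐒}(ℕ × [s,r] × I)` is a connected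
subset of `S_u`. -/
theorem Pset_isConnected (u : StoneCech ℕ)
    (hu : ∀ n : ℕ, u ≠ stoneCechUnit n)
    (hne : (Su u).Nonempty) (hcomp : IsCompact (Su u)) (hconn : IsConnected (Su u)) :
    ∀ s r : unitInterval, s < r → IsConnected (Pset u s r) :=
  Pset_isConnected_general u hconn

end
end

section
/- For every t ∈ (0,1], L_t = ⋂_{0 ≤ s < t} L_{s,t}, where L_t := f_u⁻¹(t) ∩ cl_{S_u}(f_u⁻¹([0,t))) and L_{s,t} := cl_{S_u}(⋃_{s<r<t} P_{s,r}) with P_{s,r} := S_u ∩ cl_{β𝐒}(ℕ × [s,r] × I). -/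
open Set Topology

noncomputable section

lemma betaF_unit (p : bS) : betaF (stoneCechUnit p) = p.2.1 :=
  congrFun (stoneCechExtend_extends _) p

lemma closure_image_subset {C : Set unitInterval} (hC : IsClosed C) :
    closure (stoneCechUnit '' {p : bS | p.2.1 ∈ C}) ⊆ betaF ⁻¹' C := by
  have hcont : Continuous betaF := continuous_stoneCechExtend _
  apply closure_minimal _ (hC.preimage hcont)
  rintro _ ⟨p, hp, rfl⟩
  rw [Set.mem_preimage, betaF_unit]
  exact hp

lemma Pset_subset (u : StoneCech ℕ) (s r : unitInterval) :
    Pset u s r ⊆ fu u ⁻¹' Set.Icc s r := fun w hw =>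
  closure_image_subset isClosed_Icc hw

lemma mem_Pset (u : StoneCech ℕ) {s r : unitInterval} (w : Su u)
    (h : fu u w ∈ Set.Ioo s r) : w ∈ Pset u s r := by
  have hcover : Set.range (stoneCechUnit : bS → StoneCech bS) ⊆
      stoneCechUnit '' {p : bS | p.2.1 ∈ Set.Icc s r} ∪
      stoneCechUnit '' {p : bS | p.2.1 ∈ Set.Icc 0 s ∪ Set.Icc r 1} := by
    rintro _ ⟨p, rfl⟩
    rcases le_total p.2.1 s with hle | hle
    · exact Or.inr ⟨p, Or.inl ⟨p.2.1.2.1, hle⟩, rfl⟩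
    · rcases le_total p.2.1 r with hle' | hle'
      · exact Or.inl ⟨p, ⟨hle, hle'⟩, rfl⟩
      · exact Or.inr ⟨p, Or.inr ⟨hle', p.2.1.2.2⟩, rfl⟩
  have hw : (w : StoneCech bS) ∈
      closure (stoneCechUnit '' {p : bS | p.2.1 ∈ Set.Icc s r}) ∪
      closure (stoneCechUnit '' {p : bS | p.2.1 ∈ Set.Icc 0 s ∪ Set.Icc r 1}) := by
    rw [← closure_union]
    exact closure_mono hcover (by rw [denseRange_stoneCechUnit.closure_range]; trivial)
  rcases hw with hw | hw
  · exact hw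
  · exfalso
    have := closure_image_subset (isClosed_Icc.union isClosed_Icc) hw
    rcases this with h1 | h1
    · exact absurd h1.2 (not_le.mpr h.1)
    · exact absurd h1.1 (not_le.mpr h.2)

lemma Lst_subset_closure_Ioo (u : StoneCech ℕ) {s t : unitInterval} :
    closure (fu u ⁻¹' Set.Ioo s t) ⊆ Lst u s t := by
  apply closure_mono
  intro w hw
  obtain ⟨r, hr1, hr2⟩ := exists_between hw.2
  exact Set.mem_biUnion ⟨lt_trans hw.1 hr1, hr2⟩ (mem_Pset u w ⟨hw.1, hr1⟩)

/-- For every `t ∈ (0,1]`, `L_t = ⋂_{0 ≤ s < t} L_{s,t}`. -/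
theorem Lset_eq_iInter_Lst (u : StoneCech ℕ)
    (hu : ∀ n : ℕ, u ≠ stoneCechUnit n) :
    ∀ t : unitInterval, 0 < t → Lset u t = ⋂ s ∈ Set.Iio t, Lst u s t := by
  intro t ht
  ext z
  simp only [Set.mem_iInter, Set.mem_Iio, Lset, Set.mem_inter_iff, Set.mem_preimage,
    Set.mem_singleton_iff]
  constructor
  · rintro ⟨hz1, hz2⟩ s hs
    -- z ∈ closure (fu⁻¹ (Ioo s t))
    have hsub : fu u ⁻¹' Set.Ico 0 t ⊆ fu u ⁻¹' Set.Iic s ∪ fu u ⁻¹' Set.Ioo s t := by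
      intro w hw
      rcases le_or_gt (fu u w) s with h | h
      · exact Or.inl h
      · exact Or.inr ⟨h, hw.2⟩
    have hz3 : z ∈ closure (fu u ⁻¹' Set.Iic s) ∪ closure (fu u ⁻¹' Set.Ioo s t) := by
      rw [← closure_union]; exact closure_mono hsub hz2
    have hz4 : z ∈ closure (fu u ⁻¹' Set.Ioo s t) := by
      rcases hz3 with h | h
      · rw [IsClosed.closure_eq (isClosed_Iic.preimage (continuous_fu u))] at h
        exact absurd (hz1 ▸ h) (not_le.mpr hs)
      · exact h
    exact Lst_subset_closure_Ioo u hz4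
  · intro hz
    have key : ∀ s : unitInterval, s < t → fu u z ∈ Set.Icc s t := by
      intro s hs
      have h1 : Lst u s t ⊆ fu u ⁻¹' Set.Icc s t := by
        apply closure_minimal _ (isClosed_Icc.preimage (continuous_fu u))
        apply Set.iUnion₂_subset
        intro r hr
        exact (Pset_subset u s r).trans
          (Set.preimage_mono (Set.Icc_subset_Icc le_rfl hr.2.le))
      exact h1 (hz s hs)
    have hle : fu u z ≤ t := (key 0 ht).2
    have heq : fu u z = t := by
      by_contra hne
      have hlt : fu u z < t := lt_of_le_of_ne hle hne
      obtain ⟨s, hs1, hs2⟩ := exists_between hlt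
      exact absurd (key s hs2).1 (not_le.mpr hs1)
    refine ⟨heq, ?_⟩
    have h2 : Lst u 0 t ⊆ closure (fu u ⁻¹' Set.Ico 0 t) := by
      apply closure_minimal _ isClosed_closure
      apply Set.iUnion₂_subset
      intro r hr
      refine subset_trans ?_ subset_closure
      exact (Pset_subset u 0 r).trans (Set.preimage_mono (fun x hx => ⟨hx.1, lt_of_le_of_lt hx.2 hr.2⟩))
    exact h2 (hz 0 ht)

end
end

section
/- For each t ∈ (0,1), the connected components of the frontier Fr_{S_u}(f_u⁻¹(t)) of the fiber f_u⁻¹(t) in S_u are exactly the two sets L_t and R_t; in particular the frontier has exactly two connected components. -/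
open Set Topology

noncomputable section

section AuxProof

lemma fu_mem_of_mem_closure (u : StoneCech ℕ) {B : Set unitInterval} (hB : IsClosed B)
    {z : Su u} (hz : (z : StoneCech bS) ∈ closure (stoneCechUnit '' {p : bS | p.2.1 ∈ B})) :
    fu u z ∈ B := by
  have h1 : closure (stoneCechUnit '' {p : bS | p.2.1 ∈ B}) ⊆ betaF ⁻¹' B := by
    apply closure_minimal _ (hB.preimage continuous_betaF)
    rintro _ ⟨p, hp, rfl⟩
    simpa [betaF_unit] using hp
  exact h1 hz

lemma pset_subset (u : StoneCech ℕ) (s r : unitInterval) :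
    Pset u s r ⊆ fu u ⁻¹' (Set.Icc s r) :=
  fun _ hz => fu_mem_of_mem_closure u isClosed_Icc hz

lemma subset_pset (u : StoneCech ℕ) {s r : unitInterval} :
    fu u ⁻¹' (Set.Ioo s r) ⊆ Pset u s r := by
  intro z hz
  have huniv : (z : StoneCech bS) ∈ closure (Set.range (stoneCechUnit : bS → StoneCech bS)) := by
    rw [denseRange_stoneCechUnit.closure_range]; trivial
  have hsplit : (Set.range (stoneCechUnit : bS → StoneCech bS)) =
      stoneCechUnit '' {p : bS | p.2.1 ∈ Set.Icc 0 s} ∪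
      (stoneCechUnit '' {p : bS | p.2.1 ∈ Set.Icc s r} ∪
       stoneCechUnit '' {p : bS | p.2.1 ∈ Set.Icc r 1}) := by
    have hU : (Set.univ : Set bS) = {p : bS | p.2.1 ∈ Set.Icc 0 s} ∪
        ({p : bS | p.2.1 ∈ Set.Icc s r} ∪ {p : bS | p.2.1 ∈ Set.Icc r 1}) := by
      ext p
      simp only [Set.mem_univ, true_iff, Set.mem_union, Set.mem_setOf_eq, Set.mem_Icc]
      rcases le_or_gt p.2.1 s with h | h
      · exact Or.inl ⟨unitInterval.nonneg', h⟩
      rcases le_or_gt r p.2.1 with h' | h'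
      · exact Or.inr (Or.inr ⟨h', unitInterval.le_one'⟩)
      · exact Or.inr (Or.inl ⟨h.le, h'.le⟩)
    rw [← Set.image_univ, hU, Set.image_union, Set.image_union]
  rw [hsplit, closure_union, closure_union] at huniv
  rcases huniv with h | h | h
  · exact absurd (fu_mem_of_mem_closure u isClosed_Icc h).2 (not_le.mpr hz.1)
  · exact h
  · exact absurd (fu_mem_of_mem_closure u isClosed_Icc h).1 (not_le.mpr hz.2)

lemma pset_mono (u : StoneCech ℕ) {s r s' r' : unitInterval} (hs : s' ≤ s) (hr : r ≤ r') :
    Pset u s r ⊆ Pset u s' r' :=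
  Set.preimage_mono (closure_mono (Set.image_mono fun _ hp => ⟨hs.trans hp.1, hp.2.trans hr⟩))

lemma isConnected_iInter_aux {X : Type*} [TopologicalSpace X] [T2Space X] {ι : Type*}
    [Nonempty ι] {K : ι → Set X} (hd : Directed (· ⊇ ·) K) (hc : ∀ i, IsCompact (K i))
    (hcl : ∀ i, IsClosed (K i)) (hne : ∀ i, (K i).Nonempty)
    (hconn : ∀ i, IsPreconnected (K i)) : IsConnected (⋂ i, K i) := by
  have hKne : (⋂ i, K i).Nonempty :=
    IsCompact.nonempty_iInter_of_directed_nonempty_isCompact_isClosed K hd hne hc hcl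
  refine ⟨hKne, ?_⟩
  have hKcl : IsClosed (⋂ i, K i) := isClosed_iInter hcl
  rw [isPreconnected_iff_subset_of_fully_disjoint_closed hKcl]
  intro uu vv huu hvv hcov hdisj
  set A := (⋂ i, K i) ∩ uu with hA
  set B := (⋂ i, K i) ∩ vv with hB
  rcases A.eq_empty_or_nonempty with hAe | hAne
  · right
    intro x hx
    rcases hcov hx with h | h
    · exact absurd (Set.mem_inter hx h) (by rw [hA] at hAe; simp [hAe])
    · exact h
  rcases B.eq_empty_or_nonempty with hBe | hBne
  · left
    intro x hx
    rcases hcov hx with h | h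
    · exact h
    · exact absurd (Set.mem_inter hx h) (by rw [hB] at hBe; simp [hBe])
  exfalso
  have i₀ : ι := Classical.arbitrary ι
  have hKicomp : IsCompact (⋂ i, K i) :=
    (hc i₀).of_isClosed_subset hKcl (Set.iInter_subset K i₀)
  have hAc : IsCompact A := hKicomp.inter_right huu
  have hBc : IsCompact B := hKicomp.inter_right hvv
  have hABd : Disjoint A B :=
    hdisj.mono Set.inter_subset_right Set.inter_subset_right
  obtain ⟨U, V, hUo, hVo, hAU, hBV, hUV⟩ := SeparatedNhds.of_isCompact_isCompact hAc hBc hABd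
  have hKiUV : (⋂ i, K i) ⊆ U ∪ V := by
    intro x hx
    rcases hcov hx with h | h
    · exact Or.inl (hAU ⟨hx, h⟩)
    · exact Or.inr (hBV ⟨hx, h⟩)
  have hex : ∃ i, K i ⊆ U ∪ V := by
    by_contra hcon
    push_neg at hcon
    have h1 : (⋂ i, K i \ (U ∪ V)).Nonempty := by
      apply IsCompact.nonempty_iInter_of_directed_nonempty_isCompact_isClosed
      · intro i j
        obtain ⟨k, hki, hkj⟩ := hd i j
        exact ⟨k, Set.diff_subset_diff_left hki, Set.diff_subset_diff_left hkj⟩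
      · intro i
        exact Set.diff_nonempty.mpr (hcon i)
      · exact fun i => (hc i).diff (hUo.union hVo)
      · exact fun i => (hcl i).sdiff (hUo.union hVo)
    obtain ⟨x, hx⟩ := h1
    have hx1 : x ∈ ⋂ i, K i := Set.mem_iInter.2 fun i => (Set.mem_iInter.1 hx i).1
    exact (Set.mem_iInter.1 hx i₀).2 (hKiUV hx1)
  obtain ⟨i, hi⟩ := hex
  have hne1 : (K i ∩ U).Nonempty :=
    hAne.mono (Set.subset_inter ((Set.inter_subset_left).trans (Set.iInter_subset K i)) hAU)
  have hne2 : (K i ∩ V).Nonempty :=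
    hBne.mono (Set.subset_inter ((Set.inter_subset_left).trans (Set.iInter_subset K i)) hBV)
  obtain ⟨x, -, hx2⟩ := hconn i U V hUo hVo hi hne1 hne2
  exact (hUV.le_bot hx2).elim
lemma lst_subset_Icc (u : StoneCech ℕ) {s t : unitInterval} :
    Lst u s t ⊆ fu u ⁻¹' (Set.Icc s t) := by
  apply closure_minimal _ (isClosed_Icc.preimage (continuous_fu u))
  refine Set.iUnion₂_subset fun r hr => ?_
  exact (pset_subset u s r).trans
    (Set.preimage_mono fun x hx => ⟨hx.1, hx.2.trans hr.2.le⟩)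

lemma lst_subset_closure_Ico (u : StoneCech ℕ) {s t : unitInterval} :
    Lst u s t ⊆ closure (fu u ⁻¹' (Set.Ico 0 t)) := by
  apply closure_mono
  refine Set.iUnion₂_subset fun r hr => ?_
  intro x hx
  have h := pset_subset u s r hx
  exact ⟨unitInterval.nonneg', lt_of_le_of_lt h.2 hr.2⟩

lemma Lset_eq_iInter (u : StoneCech ℕ) {t : unitInterval} (ht : t ∈ Set.Ioo (0:unitInterval) 1) :
    Lset u t = ⋂ s : {s : unitInterval // s < t}, Lst u s.1 t := by
  apply Set.Subset.antisymm
  · intro z hz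
    have hzt : fu u z = t := hz.1
    refine Set.mem_iInter.2 fun ⟨s, hs⟩ => ?_
    have hcover : fu u ⁻¹' (Set.Ico 0 t) ⊆
        fu u ⁻¹' (Set.Icc 0 s) ∪ fu u ⁻¹' (Set.Ioo s t) := by
      intro w hw
      rcases le_or_gt (fu u w) s with h | h
      · exact Or.inl ⟨unitInterval.nonneg', h⟩
      · exact Or.inr ⟨h, hw.2⟩
    have h1 : (z : Su u) ∈ closure (fu u ⁻¹' (Set.Icc 0 s)) ∪
        closure (fu u ⁻¹' (Set.Ioo s t)) := by
      rw [← closure_union]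
      exact closure_mono hcover hz.2
    have h2 : (z : Su u) ∈ closure (fu u ⁻¹' (Set.Ioo s t)) := by
      rcases h1 with h | h
      · rw [(isClosed_Icc.preimage (continuous_fu u)).closure_eq] at h
        exact absurd (hzt ▸ h.2) (not_le.mpr hs)
      · exact h
    refine closure_mono ?_ h2
    intro w hw
    obtain ⟨r, hr1, hr2⟩ := exists_between hw.2
    exact Set.mem_biUnion ⟨hw.1.trans hr1, hr2⟩ (subset_pset u ⟨hw.1, hr1⟩)
  · intro z hz
    rw [Set.mem_iInter] at hz
    have h1 : ∀ s : unitInterval, s < t → fu u z ∈ Set.Icc s t :=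
      fun s hs => lst_subset_Icc u (hz ⟨s, hs⟩)
    have hzt : fu u z = t := by
      refine le_antisymm (h1 0 ht.1).2 ?_
      by_contra hcon
      push_neg at hcon
      obtain ⟨s, hs1, hs2⟩ := exists_between hcon
      exact absurd (h1 s hs2).1 (not_le.mpr hs1)
    exact ⟨hzt, lst_subset_closure_Ico u (hz ⟨0, ht.1⟩)⟩

lemma isConnected_lst (u : StoneCech ℕ) (hcomp : IsCompact (Su u))
    (hP : ∀ s r : unitInterval, s < r → IsConnected (Pset u s r))
    {s t : unitInterval} (hst : s < t) : IsConnected (Lst u s t) := by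
  obtain ⟨m, hm1, hm2⟩ := exists_between hst
  have hne : (Lst u s t).Nonempty := by
    obtain ⟨x, hx⟩ := (hP s m hm1).nonempty
    exact ⟨x, subset_closure (Set.mem_biUnion ⟨hm1, hm2⟩ hx)⟩
  refine ⟨hne, ?_⟩
  apply IsPreconnected.closure
  have heq : (⋃ r ∈ Set.Ioo s t, Pset u s r) = ⋃₀ ((fun r => Pset u s r) '' Set.Ioo s t) := by
    rw [Set.sUnion_image]
  rw [heq]
  apply IsPreconnected.sUnion_directed
  · rintro _ ⟨r₁, hr₁, rfl⟩ _ ⟨r₂, hr₂, rfl⟩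
    refine ⟨Pset u s (max r₁ r₂), ⟨max r₁ r₂, ⟨lt_max_iff.2 (Or.inl hr₁.1), max_lt hr₁.2 hr₂.2⟩,
      rfl⟩, pset_mono u le_rfl (le_max_left _ _), pset_mono u le_rfl (le_max_right _ _)⟩
  · rintro _ ⟨r, hr, rfl⟩
    exact (hP s r hr.1).isPreconnected

lemma isConnected_Lset (u : StoneCech ℕ) (hcomp : IsCompact (Su u))
    (hP : ∀ s r : unitInterval, s < r → IsConnected (Pset u s r))
    {t : unitInterval} (ht : t ∈ Set.Ioo (0:unitInterval) 1) : IsConnected (Lset u t) := by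
  haveI : CompactSpace (Su u) := isCompact_iff_compactSpace.mp hcomp
  rw [Lset_eq_iInter u ht]
  haveI : Nonempty {s : unitInterval // s < t} := ⟨⟨0, ht.1⟩⟩
  apply isConnected_iInter_aux
  · rintro ⟨s₁, h₁⟩ ⟨s₂, h₂⟩
    refine ⟨⟨max s₁ s₂, max_lt h₁ h₂⟩, ?_, ?_⟩ <;>
    · apply closure_mono
      refine Set.iUnion₂_subset fun r hr => ?_
      refine (pset_mono u (by simp) le_rfl).trans (Set.subset_biUnion_of_mem ?_)
      exact ⟨lt_of_le_of_lt (by simp) hr.1, hr.2⟩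
  · exact fun i => isClosed_closure.isCompact
  · exact fun i => isClosed_closure
  · exact fun i => (isConnected_lst u hcomp hP i.2).nonempty
  · exact fun i => (isConnected_lst u hcomp hP i.2).isPreconnected
/-- The mirror of `Lst` on the right side of `t`. -/
def Rst (u : StoneCech ℕ) (t r : unitInterval) : Set (Su u) :=
  closure (⋃ s ∈ Set.Ioo t r, Pset u s r)

lemma rst_subset_Icc (u : StoneCech ℕ) {t r : unitInterval} :
    Rst u t r ⊆ fu u ⁻¹' (Set.Icc t r) := by
  apply closure_minimal _ (isClosed_Icc.preimage (continuous_fu u))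
  refine Set.iUnion₂_subset fun s hs => ?_
  exact (pset_subset u s r).trans
    (Set.preimage_mono fun x hx => ⟨hs.1.le.trans hx.1, hx.2⟩)

lemma rst_subset_closure_Ioc (u : StoneCech ℕ) {t r : unitInterval} :
    Rst u t r ⊆ closure (fu u ⁻¹' (Set.Ioc t 1)) := by
  apply closure_mono
  refine Set.iUnion₂_subset fun s hs => ?_
  intro x hx
  have h := pset_subset u s r hx
  exact ⟨lt_of_lt_of_le hs.1 h.1, unitInterval.le_one'⟩

lemma Rset_eq_iInter (u : StoneCech ℕ) {t : unitInterval} (ht : t ∈ Set.Ioo (0:unitInterval) 1) :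
    Rset u t = ⋂ r : {r : unitInterval // t < r}, Rst u t r.1 := by
  apply Set.Subset.antisymm
  · intro z hz
    have hzt : fu u z = t := hz.1
    refine Set.mem_iInter.2 fun ⟨r, hr⟩ => ?_
    have hcover : fu u ⁻¹' (Set.Ioc t 1) ⊆
        fu u ⁻¹' (Set.Ioo t r) ∪ fu u ⁻¹' (Set.Icc r 1) := by
      intro w hw
      rcases lt_or_ge (fu u w) r with h | h
      · exact Or.inl ⟨hw.1, h⟩
      · exact Or.inr ⟨h, unitInterval.le_one'⟩
    have h1 : (z : Su u) ∈ closure (fu u ⁻¹' (Set.Ioo t r)) ∪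
        closure (fu u ⁻¹' (Set.Icc r 1)) := by
      rw [← closure_union]
      exact closure_mono hcover hz.2
    have h2 : (z : Su u) ∈ closure (fu u ⁻¹' (Set.Ioo t r)) := by
      rcases h1 with h | h
      · exact h
      · rw [(isClosed_Icc.preimage (continuous_fu u)).closure_eq] at h
        exact absurd (hzt ▸ h.1) (not_le.mpr hr)
    refine closure_mono ?_ h2
    intro w hw
    obtain ⟨s, hs1, hs2⟩ := exists_between hw.1
    exact Set.mem_biUnion ⟨hs1, hs2.trans hw.2⟩ (subset_pset u ⟨hs2, hw.2⟩)
  · intro z hz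
    rw [Set.mem_iInter] at hz
    have h1 : ∀ r : unitInterval, t < r → fu u z ∈ Set.Icc t r :=
      fun r hr => rst_subset_Icc u (hz ⟨r, hr⟩)
    have hzt : fu u z = t := by
      refine le_antisymm ?_ (h1 1 ht.2).1
      by_contra hcon
      push_neg at hcon
      obtain ⟨r, hr1, hr2⟩ := exists_between hcon
      exact absurd (h1 r hr1).2 (not_le.mpr hr2)
    exact ⟨hzt, rst_subset_closure_Ioc u (hz ⟨1, ht.2⟩)⟩

lemma isConnected_rst (u : StoneCech ℕ)
    (hP : ∀ s r : unitInterval, s < r → IsConnected (Pset u s r))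
    {t r : unitInterval} (htr : t < r) : IsConnected (Rst u t r) := by
  obtain ⟨m, hm1, hm2⟩ := exists_between htr
  have hne : (Rst u t r).Nonempty := by
    obtain ⟨x, hx⟩ := (hP m r hm2).nonempty
    exact ⟨x, subset_closure (Set.mem_biUnion ⟨hm1, hm2⟩ hx)⟩
  refine ⟨hne, ?_⟩
  apply IsPreconnected.closure
  have heq : (⋃ s ∈ Set.Ioo t r, Pset u s r) = ⋃₀ ((fun s => Pset u s r) '' Set.Ioo t r) := by
    rw [Set.sUnion_image]
  rw [heq]
  apply IsPreconnected.sUnion_directed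
  · rintro _ ⟨s₁, hs₁, rfl⟩ _ ⟨s₂, hs₂, rfl⟩
    refine ⟨Pset u (min s₁ s₂) r, ⟨min s₁ s₂, ⟨lt_min hs₁.1 hs₂.1,
      min_lt_iff.2 (Or.inl hs₁.2)⟩, rfl⟩,
      pset_mono u (min_le_left _ _) le_rfl, pset_mono u (min_le_right _ _) le_rfl⟩
  · rintro _ ⟨s, hs, rfl⟩
    exact (hP s r hs.2).isPreconnected

lemma isConnected_Rset (u : StoneCech ℕ) (hcomp : IsCompact (Su u))
    (hP : ∀ s r : unitInterval, s < r → IsConnected (Pset u s r))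
    {t : unitInterval} (ht : t ∈ Set.Ioo (0:unitInterval) 1) : IsConnected (Rset u t) := by
  haveI : CompactSpace (Su u) := isCompact_iff_compactSpace.mp hcomp
  rw [Rset_eq_iInter u ht]
  haveI : Nonempty {r : unitInterval // t < r} := ⟨⟨1, ht.2⟩⟩
  apply isConnected_iInter_aux
  · rintro ⟨r₁, h₁⟩ ⟨r₂, h₂⟩
    refine ⟨⟨min r₁ r₂, lt_min h₁ h₂⟩, ?_, ?_⟩
    · apply closure_mono
      refine Set.iUnion₂_subset fun s hs => ?_
      intro z hz
      have hmem : s ∈ Set.Ioo t r₁ := ⟨hs.1, lt_of_lt_of_le hs.2 (min_le_left r₁ r₂)⟩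
      exact Set.mem_biUnion hmem (pset_mono u le_rfl (min_le_left r₁ r₂) hz)
    · apply closure_mono
      refine Set.iUnion₂_subset fun s hs => ?_
      intro z hz
      have hmem : s ∈ Set.Ioo t r₂ := ⟨hs.1, lt_of_lt_of_le hs.2 (min_le_right r₁ r₂)⟩
      exact Set.mem_biUnion hmem (pset_mono u le_rfl (min_le_right r₁ r₂) hz)
  · exact fun i => isClosed_closure.isCompact
  · exact fun i => isClosed_closure
  · exact fun i => (isConnected_rst u hP i.2).nonempty
  · exact fun i => (isConnected_rst u hP i.2).isPreconnected
lemma frontier_fiber_eq (u : StoneCech ℕ) {t : unitInterval}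
    (ht : t ∈ Set.Ioo (0:unitInterval) 1) :
    frontier (fu u ⁻¹' {t}) = Lset u t ∪ Rset u t := by
  have hclosed : IsClosed (fu u ⁻¹' {t}) := isClosed_singleton.preimage (continuous_fu u)
  have hcompl : ({t} : Set unitInterval)ᶜ = Set.Ico 0 t ∪ Set.Ioc t 1 := by
    ext x
    simp only [Set.mem_compl_iff, Set.mem_singleton_iff, Set.mem_union, Set.mem_Ico, Set.mem_Ioc]
    constructor
    · intro h
      rcases lt_or_gt_of_ne h with h' | h'
      · exact Or.inl ⟨unitInterval.nonneg', h'⟩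
      · exact Or.inr ⟨h', unitInterval.le_one'⟩
    · rintro (⟨_, h⟩ | ⟨h, _⟩)
      exacts [h.ne, h.ne']
  rw [frontier_eq_closure_inter_closure, hclosed.closure_eq, ← Set.preimage_compl, hcompl,
    Set.preimage_union, closure_union, Set.inter_union_distrib_left]
  rfl

lemma disjoint_Lset_Rset (u : StoneCech ℕ) (hFsp : IsFSpace (Su u)) (t : unitInterval) :
    Disjoint (Lset u t) (Rset u t) := by
  set g : (Su u) → ℝ := fun z => ((fu u z : ℝ)) with hg
  have hgc : Continuous g := continuous_subtype_val.comp (continuous_fu u)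
  have hA : fu u ⁻¹' (Set.Ico 0 t) = g ⁻¹' (Set.Iio (t : ℝ)) := by
    ext z
    simp only [Set.mem_preimage, Set.mem_Ico, Set.mem_Iio, hg]
    constructor
    · intro h
      exact_mod_cast h.2
    · intro h
      exact ⟨unitInterval.nonneg', by exact_mod_cast h⟩
  have hB : fu u ⁻¹' (Set.Ioc t 1) = g ⁻¹' (Set.Ioi (t : ℝ)) := by
    ext z
    simp only [Set.mem_preimage, Set.mem_Ioc, Set.mem_Ioi, hg]
    constructor
    · intro h
      exact_mod_cast h.1
    · intro h
      exact ⟨by exact_mod_cast h, unitInterval.le_one'⟩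
  have hAopen : IsOpen (fu u ⁻¹' (Set.Ico 0 t)) := hA ▸ isOpen_Iio.preimage hgc
  have hBopen : IsOpen (fu u ⁻¹' (Set.Ioc t 1)) := hB ▸ isOpen_Ioi.preimage hgc
  have hAF : IsFSigma (fu u ⁻¹' (Set.Ico 0 t)) := by
    refine ⟨fun n => g ⁻¹' (Set.Iic ((t : ℝ) - 1 / (n + 1))), fun n =>
      isClosed_Iic.preimage hgc, ?_⟩
    rw [hA]
    ext z
    simp only [Set.mem_preimage, Set.mem_Iio, Set.mem_iUnion, Set.mem_Iic]
    constructor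
    · intro h
      obtain ⟨n, hn⟩ := exists_nat_one_div_lt (sub_pos.mpr h)
      exact ⟨n, by linarith⟩
    · intro ⟨n, hn⟩
      have h0 : (0:ℝ) < 1 / (n + 1) := by positivity
      linarith
  have hBF : IsFSigma (fu u ⁻¹' (Set.Ioc t 1)) := by
    refine ⟨fun n => g ⁻¹' (Set.Ici ((t : ℝ) + 1 / (n + 1))), fun n =>
      isClosed_Ici.preimage hgc, ?_⟩
    rw [hB]
    ext z
    simp only [Set.mem_preimage, Set.mem_Ioi, Set.mem_iUnion, Set.mem_Ici]
    constructor
    · intro h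
      obtain ⟨n, hn⟩ := exists_nat_one_div_lt (sub_pos.mpr h)
      exact ⟨n, by linarith⟩
    · intro ⟨n, hn⟩
      have h0 : (0:ℝ) < 1 / (n + 1) := by positivity
      linarith
  have hABd : Disjoint (fu u ⁻¹' (Set.Ico 0 t)) (fu u ⁻¹' (Set.Ioc t 1)) := by
    rw [Set.disjoint_left]
    intro z hz1 hz2
    exact absurd hz2.1 (not_lt.mpr hz1.2.le)
  have hdisj := hFsp _ _ hAopen hBopen hAF hBF hABd
  exact hdisj.mono Set.inter_subset_right Set.inter_subset_right
/-- For each `t ∈ (0,1)`, the connected components of the frontier of `f_u⁻¹(t)` in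
`S_u` are exactly the two distinct sets `L_t` and `R_t`. -/
theorem components_of_frontier (u : StoneCech ℕ)
    (hu : ∀ n : ℕ, u ≠ stoneCechUnit n)
    (hne : (Su u).Nonempty) (hcomp : IsCompact (Su u)) (hconn : IsConnected (Su u))
    (hFsp : IsFSpace (Su u))
    (hP : ∀ s r : unitInterval, s < r → IsConnected (Pset u s r))
    (t : unitInterval) (ht : t ∈ Set.Ioo (0 : unitInterval) 1) :
    {C : Set (Su u) | ∃ x ∈ frontier (fu u ⁻¹' {t}),
        C = connectedComponentIn (frontier (fu u ⁻¹' {t})) x} = {Lset u t, Rset u t} ∧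
    Lset u t ≠ Rset u t := by
  haveI : CompactSpace (Su u) := isCompact_iff_compactSpace.mp hcomp
  set F := frontier (fu u ⁻¹' {t}) with hFdef
  have hL : IsConnected (Lset u t) := isConnected_Lset u hcomp hP ht
  have hR : IsConnected (Rset u t) := isConnected_Rset u hcomp hP ht
  have hd : Disjoint (Lset u t) (Rset u t) := disjoint_Lset_Rset u hFsp t
  have hFeq : F = Lset u t ∪ Rset u t := frontier_fiber_eq u ht
  have hLclosed : IsClosed (Lset u t) :=
    (isClosed_singleton.preimage (continuous_fu u)).inter isClosed_closure
  have hRclosed : IsClosed (Rset u t) :=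
    (isClosed_singleton.preimage (continuous_fu u)).inter isClosed_closure
  have hLF : Lset u t ⊆ F := hFeq ▸ Set.subset_union_left
  have hRF : Rset u t ⊆ F := hFeq ▸ Set.subset_union_right
  obtain ⟨U, V, hUo, hVo, hLU, hRV, hUV⟩ :=
    SeparatedNhds.of_isCompact_isCompact hLclosed.isCompact hRclosed.isCompact hd
  have hFUV : F ⊆ U ∪ V := hFeq ▸ Set.union_subset_union hLU hRV
  have hcompL : ∀ x ∈ Lset u t, connectedComponentIn F x = Lset u t := by
    intro x hx
    apply Set.Subset.antisymm
    · have hsubU : connectedComponentIn F x ⊆ U :=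
        isPreconnected_connectedComponentIn.subset_left_of_subset_union hUo hVo hUV
          ((connectedComponentIn_subset F x).trans hFUV)
          ⟨x, mem_connectedComponentIn (hLF hx), hLU hx⟩
      intro y hy
      rcases hFeq ▸ connectedComponentIn_subset F x hy with h | h
      · exact h
      · exact absurd (Set.mem_inter (hsubU hy) (hRV h)) (by rw [hUV.inter_eq]; simp)
    · exact hL.isPreconnected.subset_connectedComponentIn hx hLF
  have hcompR : ∀ x ∈ Rset u t, connectedComponentIn F x = Rset u t := by
    intro x hx
    apply Set.Subset.antisymm
    · have hsubV : connectedComponentIn F x ⊆ V :=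
        isPreconnected_connectedComponentIn.subset_right_of_subset_union hUo hVo hUV
          ((connectedComponentIn_subset F x).trans hFUV)
          ⟨x, mem_connectedComponentIn (hRF hx), hRV hx⟩
      intro y hy
      rcases hFeq ▸ connectedComponentIn_subset F x hy with h | h
      · exact absurd (Set.mem_inter (hLU h) (hsubV hy)) (by rw [hUV.inter_eq]; simp)
      · exact h
    · exact hR.isPreconnected.subset_connectedComponentIn hx hRF
  constructor
  · apply Set.Subset.antisymm
    · rintro C ⟨x, hxF, rfl⟩
      rcases hFeq ▸ hxF with h | h
      · exact Or.inl (hcompL x h)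
      · exact Or.inr (hcompR x h)
    · rintro C (rfl | rfl)
      · obtain ⟨x, hx⟩ := hL.nonempty
        exact ⟨x, hLF hx, (hcompL x hx).symm⟩
      · obtain ⟨x, hx⟩ := hR.nonempty
        exact ⟨x, hRF hx, (hcompR x hx).symm⟩
  · intro h
    obtain ⟨x, hx⟩ := hL.nonempty
    exact Set.disjoint_left.mp hd hx (h ▸ hx)
end AuxProof
end
end

section
/- Let h : I → I be a homeomorphism of the unit interval, and let h_u be the restriction to S_u of the Stone–Čech extension of the map 𝐒 → 𝐒, (n,x,y) ↦ (n,h(x),y). Then h_u is a homeomorphism of S_u onto itself, it permutes the fibers of f_u (namely h_u[f_u⁻¹(t)] = f_u⁻¹(h(t)) for every t ∈ I), and h_u[X_α] = X_α for every ordinal α. -/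
open Set Topology

noncomputable section

/-- The map `𝐒 → 𝐒`, `(n,x,y) ↦ (n, h x, y)`, induced by `h : I → I`. -/
def gMap (h : unitInterval ≃ₜ unitInterval) : bS → bS :=
  fun p => (p.1, (h p.2.1, p.2.2))

lemma gMap_continuous (h : unitInterval ≃ₜ unitInterval) :
    Continuous (stoneCechUnit ∘ gMap h) :=
  continuous_stoneCechUnit.comp
    (continuous_fst.prodMk
      ((h.continuous.comp (continuous_fst.comp continuous_snd)).prodMk
        (continuous_snd.comp continuous_snd)))

/-- `βg : β𝐒 → β𝐒`, the Stone–Čech extension of `(n,x,y) ↦ (n, h x, y)`. -/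
def betaG (h : unitInterval ≃ₜ unitInterval) : StoneCech bS → StoneCech bS :=
  stoneCechExtend (gMap_continuous h)

/-!
`βg` has inverse `β(g⁻¹)` and commutes with `βπ`, so it restricts to a homeomorphism `h_u` of
`S_u`; as `βf ∘ βg = h ∘ βf` (both sides agree on the dense copy of `𝐒`), `h_u` carries the fibre
of `f_u` over `t` onto the fibre over `h t`. The sets `X_α` are built from the topology of `S_u`
and its partition into fibres of `f_u` alone, so by transfinite induction any self-homeomorphism
of `S_u` permuting these fibres fixes every `X_α`.
-/

section relInt

variable {Y Z : Type*} [TopologicalSpace Y] [TopologicalSpace Z]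

lemma mem_relInt_iff {A B : Set Y} {y : Y} : y ∈ relInt A B ↔ y ∈ A ∧ B ∈ 𝓝[A] y := by
  constructor
  · rintro ⟨a, ha, rfl⟩
    exact ⟨a.2, preimage_coe_mem_nhds_subtype.1 (mem_interior_iff_mem_nhds.1 ha)⟩
  · rintro ⟨hy, hB⟩
    exact ⟨⟨y, hy⟩, mem_interior_iff_mem_nhds.2 (preimage_coe_mem_nhds_subtype.2 hB), rfl⟩

lemma Homeomorph.image_relInt (e : Y ≃ₜ Z) (A B : Set Y) :
    e '' relInt A B = relInt (e '' A) (e '' B) := by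
  ext y
  have hnhds : 𝓝[e '' A] y = Filter.map e (𝓝[A] (e.symm y)) := by
    rw [e.isEmbedding.map_nhdsWithin_eq, e.apply_symm_apply]
  rw [e.image_eq_preimage_symm, mem_preimage, mem_relInt_iff, mem_relInt_iff, hnhds,
    Filter.image_mem_map_iff e.injective, e.image_eq_preimage_symm, mem_preimage]

end relInt

section StoneCech

lemma betaG_stoneCechUnit (h : unitInterval ≃ₜ unitInterval) (p : bS) :
    betaG h (stoneCechUnit p) = stoneCechUnit (gMap h p) :=
  stoneCechExtend_stoneCechUnit _ p

lemma continuous_betaG (h : unitInterval ≃ₜ unitInterval) : Continuous (betaG h) :=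
  continuous_stoneCechExtend _

lemma betaPi_betaG (h : unitInterval ≃ₜ unitInterval) (z : StoneCech bS) :
    betaPi (betaG h z) = betaPi z := by
  refine congrFun (stoneCech_hom_ext (continuous_betaPi.comp (continuous_betaG h))
    continuous_betaPi (funext fun p => ?_)) z
  simp [betaG_stoneCechUnit, betaPi, stoneCechExtend_stoneCechUnit, gMap]

lemma betaF_betaG (h : unitInterval ≃ₜ unitInterval) (z : StoneCech bS) :
    betaF (betaG h z) = h (betaF z) := by
  refine congrFun (stoneCech_hom_ext (continuous_betaF.comp (continuous_betaG h))
    (h.continuous.comp continuous_betaF) (funext fun p => ?_)) z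
  simp [betaG_stoneCechUnit, betaF, stoneCechExtend_stoneCechUnit, gMap]

lemma betaG_symm_betaG (h : unitInterval ≃ₜ unitInterval) (z : StoneCech bS) :
    betaG h.symm (betaG h z) = z := by
  refine congrFun (stoneCech_hom_ext ((continuous_betaG h.symm).comp (continuous_betaG h))
    continuous_id (funext fun p => ?_)) z
  simp [betaG_stoneCechUnit, gMap]

def betaGHomeomorph (h : unitInterval ≃ₜ unitInterval) : StoneCech bS ≃ₜ StoneCech bS where
  toFun := betaG h
  invFun := betaG h.symm
  left_inv := betaG_symm_betaG h
  right_inv z := by simpa using betaG_symm_betaG h.symm z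
  continuous_toFun := continuous_betaG h
  continuous_invFun := continuous_betaG h.symm

def betaGSu (u : StoneCech ℕ) (h : unitInterval ≃ₜ unitInterval) : Su u ≃ₜ Su u :=
  (betaGHomeomorph h).subtype fun z => Eq.congr_left (betaPi_betaG h z).symm

lemma coe_betaGSu (u : StoneCech ℕ) (h : unitInterval ≃ₜ unitInterval) (z : Su u) :
    (betaGSu u h z : StoneCech bS) = betaG h z := rfl

lemma fu_betaGSu (u : StoneCech ℕ) (h : unitInterval ≃ₜ unitInterval) (z : Su u) :
    fu u (betaGSu u h z) = h (fu u z) :=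
  betaF_betaG h z

lemma image_betaGSu_fiber (u : StoneCech ℕ) (h : unitInterval ≃ₜ unitInterval)
    (t : unitInterval) : betaGSu u h '' (fu u ⁻¹' {t}) = fu u ⁻¹' {h t} := by
  ext z
  simp only [Homeomorph.image_eq_preimage_symm, mem_preimage, mem_singleton_iff]
  rw [← h.symm_apply_eq]
  exact Eq.congr_left (fu_betaGSu u h.symm z)

end StoneCech

section Xseq

variable (u : StoneCech ℕ)

lemma Xseq_zero : Xseq u 0 = univ := by
  simp [Xseq]

lemma Xseq_succ (α : Ordinal) :
    Xseq u (Order.succ α) =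
      Xseq u α \ ⋃ t : unitInterval, relInt (Xseq u α) (Xseq u α ∩ fu u ⁻¹' {t}) := by
  simp [Xseq]

lemma Xseq_limit {o : Ordinal} (ho : Order.IsSuccLimit o) :
    Xseq u o = ⋂ β : {β : Ordinal // β < o}, Xseq u β.1 :=
  Ordinal.limitRecOn_limit _ _ _ _ ho

variable {u} {σ : unitInterval → unitInterval} (e : Su u ≃ₜ Su u)

lemma image_diff_iUnion_relInt_fiber (hσ : Function.Surjective σ)
    (he : ∀ t, e '' (fu u ⁻¹' {t}) = fu u ⁻¹' {σ t}) {X : Set (Su u)} (hX : e '' X = X) :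
    e '' (X \ ⋃ t, relInt X (X ∩ fu u ⁻¹' {t})) = X \ ⋃ t, relInt X (X ∩ fu u ⁻¹' {t}) := by
  rw [image_sdiff e.injective, hX, image_iUnion]
  congr 1
  calc ⋃ t, e '' relInt X (X ∩ fu u ⁻¹' {t})
      = ⋃ t, relInt X (X ∩ fu u ⁻¹' {σ t}) := by
        simp only [e.image_relInt, image_inter e.injective, hX, he]
    _ = ⋃ t, relInt X (X ∩ fu u ⁻¹' {t}) :=
        hσ.iUnion_comp fun t => relInt X (X ∩ fu u ⁻¹' {t})

lemma image_Xseq (hσ : Function.Surjective σ)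
    (he : ∀ t, e '' (fu u ⁻¹' {t}) = fu u ⁻¹' {σ t}) (α : Ordinal) :
    e '' Xseq u α = Xseq u α := by
  induction α using Ordinal.limitRecOn with
  | zero => rw [Xseq_zero, image_univ, e.range_coe]
  | add_one o ih =>
    rw [← Order.succ_eq_add_one, Xseq_succ]
    exact image_diff_iUnion_relInt_fiber e hσ he ih
  | limit o ho ih =>
    rw [Xseq_limit u ho, image_iInter e.bijective]
    exact iInter_congr fun β => ih β.1 β.2

end Xseq

theorem induced_homeo_fixes_Xseq_general (u : StoneCech ℕ)
    (h : unitInterval ≃ₜ unitInterval) :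
    ∃ e : (Su u) ≃ₜ (Su u),
      (∀ z : (Su u), (e z : StoneCech bS) = betaG h z.1) ∧
      (∀ t : unitInterval, e '' (fu u ⁻¹' {t}) = fu u ⁻¹' {h t}) ∧
      (∀ α : Ordinal, e '' Xseq u α = Xseq u α) :=
  ⟨betaGSu u h, coe_betaGSu u h, image_betaGSu_fiber u h,
    image_Xseq _ h.surjective (image_betaGSu_fiber u h)⟩

/-- The restriction `h_u` to `S_u` of the Stone–Čech extension of `(n,x,y) ↦ (n,h(x),y)`
is a homeomorphism of `S_u` onto itself, it permutes the fibers of `f_u` by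
`h_u[f_u⁻¹(t)] = f_u⁻¹(h t)`, and it fixes every `X_α` setwise. -/
theorem induced_homeo_fixes_Xseq (u : StoneCech ℕ)
    (hu : ∀ n : ℕ, u ≠ stoneCechUnit n)
    (h : unitInterval ≃ₜ unitInterval) :
    ∃ e : (Su u) ≃ₜ (Su u),
      (∀ z : (Su u), (e z : StoneCech bS) = betaG h z.1) ∧
      (∀ t : unitInterval, e '' (fu u ⁻¹' {t}) = fu u ⁻¹' {h t}) ∧
      (∀ α : Ordinal, e '' Xseq u α = Xseq u α) :=
  induced_homeo_fixes_Xseq_general u h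
end
end
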